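/- Under the stated setup, for every λ ∈ ℝ^n with Z_λ finite and every γ ∈ ℝ^n with Z_{γ+λ} finite, the incomplete-data log-likelihood difference satisfies the Jensen lower bound L(γ + λ) − L(λ) ≥ ∑_{y∈𝒴} (k_λ[γ·ν] − ln p_λ[e^{γ·ν}]). -/

import Mathlib

/- Common setup: log-linear models over proof trees (complete data X) and
   queries (incomplete data Y). -/

variable {X Y : Type*}

/-- `ν_#(x) = ∑ i, ν_i(x)`. -/
def nuSharp {n : ℕ} (ν : Fin n → X → ℕ) (x : X) : ℕ := ∑ i, ν i x

/-- weighted property sum `λ·ν(x)`. -/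
noncomputable def wdot {n : ℕ} (l : Fin n → ℝ) (ν : Fin n → X → ℕ) (x : X) : ℝ :=
  ∑ i, l i * (ν i x : ℝ)

/-- normalizing constant `Z_λ`. -/
noncomputable def Zpart (p0 : X → ℝ) {n : ℕ} (ν : Fin n → X → ℕ) (l : Fin n → ℝ) : ℝ :=
  ∑' x : X, Real.exp (wdot l ν x) * p0 x

/-- log-linear distribution `p_λ(x)`. -/
noncomputable def pLL (p0 : X → ℝ) {n : ℕ} (ν : Fin n → X → ℕ) (l : Fin n → ℝ) (x : X) : ℝ :=
  (Zpart p0 ν l)⁻¹ * Real.exp (wdot l ν x) * p0 x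

/-- incomplete-data probability `p_λ(y) = ∑_{x ∈ X(y)} p_λ(x)`. -/
noncomputable def pLLY (Yf : X → Y) (p0 : X → ℝ) {n : ℕ} (ν : Fin n → X → ℕ)
    (l : Fin n → ℝ) (y : Y) : ℝ :=
  ∑' x : {x : X // Yf x = y}, pLL p0 ν l x.1

/-- incomplete-data log-likelihood `L(λ) = ∑_{y ∈ 𝒴} ln p_λ(y)`. -/
noncomputable def LL (Yf : X → Y) (p0 : X → ℝ) {n : ℕ} (ν : Fin n → X → ℕ)
    (𝒴 : Multiset Y) (l : Fin n → ℝ) : ℝ :=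
  (𝒴.map fun y => Real.log (pLLY Yf p0 ν l y)).sum

/-- expectation `p_λ[f]`. -/
noncomputable def pExp (p0 : X → ℝ) {n : ℕ} (ν : Fin n → X → ℕ) (l : Fin n → ℝ)
    (f : X → ℝ) : ℝ :=
  ∑' x : X, pLL p0 ν l x * f x

/-- conditional expectation `k_λ[f]` given observed `y`. -/
noncomputable def kExp (Yf : X → Y) (p0 : X → ℝ) {n : ℕ} (ν : Fin n → X → ℕ)
    (l : Fin n → ℝ) (y : Y) (f : X → ℝ) : ℝ :=
  ∑' x : {x : X // Yf x = y}, (pLL p0 ν l x.1 / pLLY Yf p0 ν l y) * f x.1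

/-- auxiliary function
`A(γ,λ) = ∑_{y∈𝒴} (1 + k_λ[γ·ν] − p_λ[∑ i, ν̄_i e^{γ_i ν_#}])`. -/
noncomputable def Aaux (Yf : X → Y) (p0 : X → ℝ) {n : ℕ} (ν : Fin n → X → ℕ)
    (𝒴 : Multiset Y) (γ l : Fin n → ℝ) : ℝ :=
  (𝒴.map fun y =>
    1 + kExp Yf p0 ν l y (fun x => wdot γ ν x)
      - pExp p0 ν l (fun x =>
          ∑ i, ((ν i x : ℝ) / (nuSharp ν x : ℝ)) * Real.exp (γ i * (nuSharp ν x : ℝ)))).sum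

/-
Since p_{γ+λ}(x) = p_λ(x) e^{γ·ν(x)} / p_λ[e^{γ·ν}], each term ln p_{γ+λ}(y) − ln p_λ(y) equals
ln k_λ[e^{γ·ν}] − ln p_λ[e^{γ·ν}], and Jensen's inequality for the concave logarithm under the
conditional distribution k_λ bounds ln k_λ[e^{γ·ν}] below by k_λ[γ·ν].
-/

open Real

theorem tsum_mul_le_log_tsum_mul_exp {ι : Type*} {w f : ι → ℝ} (hw : ∀ i, 0 ≤ w i)
    (hws : Summable w) (hw1 : ∑' i, w i = 1) (hwf : Summable fun i => w i * f i)
    (hwe : Summable fun i => w i * exp (f i)) :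
    ∑' i, w i * f i ≤ log (∑' i, w i * exp (f i)) := by
  set m := ∑' i, w i * f i
  -- `exp` lies above its tangent line at `m`.
  have tangent : ∀ i, exp m * ((1 - m) * w i + w i * f i) ≤ w i * exp (f i) := fun i => by
    have h : exp m * (f i - m + 1) ≤ exp (f i) :=
      calc exp m * (f i - m + 1) ≤ exp m * exp (f i - m) := by gcongr; exact add_one_le_exp _
        _ = exp (f i) := by rw [← exp_add, add_sub_cancel]
    calc exp m * ((1 - m) * w i + w i * f i) = w i * (exp m * (f i - m + 1)) := by ring
      _ ≤ w i * exp (f i) := mul_le_mul_of_nonneg_left h (hw i)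
  have hsum : Summable fun i => (1 - m) * w i + w i * f i := (hws.mul_left _).add hwf
  have key : exp m ≤ ∑' i, w i * exp (f i) :=
    calc exp m = exp m * ((1 - m) * ∑' i, w i + m) := by rw [hw1]; ring
      _ = ∑' i, exp m * ((1 - m) * w i + w i * f i) := by
        rw [tsum_mul_left, (hws.mul_left _).tsum_add hwf, tsum_mul_left]
      _ ≤ ∑' i, w i * exp (f i) := (hsum.mul_left _).tsum_le_tsum tangent hwe
  exact (le_log_iff_exp_le ((exp_pos m).trans_le key)).2 key

section LogLinear

variable {Yf : X → Y} {p0 : X → ℝ} {n : ℕ} {ν : Fin n → X → ℕ}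

theorem wdot_add (γ l : Fin n → ℝ) (x : X) : wdot (γ + l) ν x = wdot γ ν x + wdot l ν x := by
  simp only [wdot, Pi.add_apply, add_mul, Finset.sum_add_distrib]

theorem pExp_exp_wdot (l γ : Fin n → ℝ) :
    pExp p0 ν l (fun x => exp (wdot γ ν x)) = Zpart p0 ν (γ + l) / Zpart p0 ν l := by
  change _ = (∑' x, exp (wdot (γ + l) ν x) * p0 x) / _
  rw [pExp, div_eq_inv_mul, ← tsum_mul_left]
  refine tsum_congr fun x => ?_
  rw [pLL, wdot_add, exp_add]
  ring

theorem pLL_add {l : Fin n → ℝ} (hZ : Zpart p0 ν l ≠ 0) (γ : Fin n → ℝ) (x : X) :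
    pLL p0 ν (γ + l) x =
      pLL p0 ν l x * exp (wdot γ ν x) / pExp p0 ν l (fun x => exp (wdot γ ν x)) := by
  rw [pExp_exp_wdot, pLL, pLL, wdot_add, exp_add, div_div_eq_mul_div]
  field_simp

theorem pLLY_add {l : Fin n → ℝ} (hZ : Zpart p0 ν l ≠ 0) (γ : Fin n → ℝ) (y : Y) :
    pLLY Yf p0 ν (γ + l) y =
      (∑' x : {x // Yf x = y}, pLL p0 ν l x * exp (wdot γ ν x)) /
        pExp p0 ν l (fun x => exp (wdot γ ν x)) := by
  simp only [pLLY, pLL_add hZ, tsum_div_const]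

theorem Zpart_pos (hp0 : ∀ x, 0 < p0 x) {l : Fin n → ℝ}
    (hZ : Summable fun x => exp (wdot l ν x) * p0 x) (x₀ : X) : 0 < Zpart p0 ν l :=
  hZ.tsum_pos (fun x => (mul_pos (exp_pos _) (hp0 x)).le) x₀ (mul_pos (exp_pos _) (hp0 x₀))

theorem pLL_pos (hp0 : ∀ x, 0 < p0 x) {l : Fin n → ℝ} (hZ : 0 < Zpart p0 ν l) (x : X) :
    0 < pLL p0 ν l x :=
  mul_pos (mul_pos (inv_pos.2 hZ) (exp_pos _)) (hp0 x)

theorem summable_pLL {l : Fin n → ℝ} (hZ : Summable fun x => exp (wdot l ν x) * p0 x) :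
    Summable (pLL p0 ν l) :=
  (hZ.mul_left (Zpart p0 ν l)⁻¹).congr fun x => by rw [pLL, mul_assoc]

theorem kExp_le_log_tsum_div {l γ : Fin n → ℝ} {y : Y} (hpl : ∀ x, 0 ≤ pLL p0 ν l x)
    (hpls : Summable (pLL p0 ν l)) (hP : 0 < pLLY Yf p0 ν l y)
    (hk : Summable fun x : {x // Yf x = y} => pLL p0 ν l x / pLLY Yf p0 ν l y * wdot γ ν x)
    (he : Summable fun x : {x // Yf x = y} => pLL p0 ν l x * exp (wdot γ ν x)) :
    kExp Yf p0 ν l y (fun x => wdot γ ν x) ≤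
      log ((∑' x : {x // Yf x = y}, pLL p0 ν l x * exp (wdot γ ν x)) / pLLY Yf p0 ν l y) := by
  have hw1 : ∑' x : {x // Yf x = y}, pLL p0 ν l x / pLLY Yf p0 ν l y = 1 := by
    rw [tsum_div_const]
    exact div_self hP.ne'
  have jensen := tsum_mul_le_log_tsum_mul_exp
    (fun x : {x // Yf x = y} => div_nonneg (hpl x) hP.le) ((hpls.subtype _).div_const _) hw1 hk
    (by simpa only [div_mul_eq_mul_div] using he.div_const (pLLY Yf p0 ν l y))
  rwa [tsum_congr fun x : {x // Yf x = y} => div_mul_eq_mul_div _ _ (exp (wdot γ ν x)),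
    tsum_div_const] at jensen

theorem kExp_sub_log_pExp_le_log_pLLY_sub (hp0 : ∀ x, 0 < p0 x) {l γ : Fin n → ℝ} {y : Y}
    (hZl : Summable fun x => exp (wdot l ν x) * p0 x)
    (hZgl : Summable fun x => exp (wdot (γ + l) ν x) * p0 x)
    (hP : 0 < pLLY Yf p0 ν l y)
    (hk : Summable fun x : {x // Yf x = y} => pLL p0 ν l x / pLLY Yf p0 ν l y * wdot γ ν x)
    (he : Summable fun x => pLL p0 ν l x * exp (wdot γ ν x)) :
    kExp Yf p0 ν l y (fun x => wdot γ ν x) - log (pExp p0 ν l (fun x => exp (wdot γ ν x))) ≤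
      log (pLLY Yf p0 ν (γ + l) y) - log (pLLY Yf p0 ν l y) := by
  obtain ⟨x₀⟩ : Nonempty {x // Yf x = y} := by
    by_contra h
    rw [not_nonempty_iff] at h
    simp [pLLY] at hP
  have hZ := Zpart_pos hp0 hZl x₀
  have hT : 0 < ∑' x : {x // Yf x = y}, pLL p0 ν l x * exp (wdot γ ν x) :=
    (he.subtype _).tsum_pos (fun x => (mul_pos (pLL_pos hp0 hZ x) (exp_pos _)).le) x₀
      (mul_pos (pLL_pos hp0 hZ x₀) (exp_pos _))
  have hE : 0 < pExp p0 ν l (fun x => exp (wdot γ ν x)) := by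
    rw [pExp_exp_wdot]
    exact div_pos (Zpart_pos hp0 hZgl x₀) hZ
  have jensen := kExp_le_log_tsum_div (fun x => (pLL_pos hp0 hZ x).le) (summable_pLL hZl) hP hk
    (he.subtype _)
  rw [log_div hT.ne' hP.ne'] at jensen
  rw [pLLY_add hZ.ne', log_div hT.ne' hE.ne']
  linarith

end LogLinear

theorem loglikelihood_difference_jensen_bound_general
    {X Y : Type*} (Yf : X → Y)
    (p0 : X → ℝ) (hp0 : ∀ x, 0 < p0 x)
    {n : ℕ} (ν : Fin n → X → ℕ)
    (𝒴 : Multiset Y) (l γ : Fin n → ℝ)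
    (hZl : Summable fun x : X => Real.exp (wdot l ν x) * p0 x)
    (hZgl : Summable fun x : X => Real.exp (wdot (γ + l) ν x) * p0 x)
    (hpos : ∀ y ∈ 𝒴, 0 < pLLY Yf p0 ν l y)
    (hksum : ∀ y ∈ 𝒴, Summable fun x : {x : X // Yf x = y} =>
      (pLL p0 ν l x.1 / pLLY Yf p0 ν l y) * wdot γ ν x.1)
    (hpsum : Summable fun x : X => pLL p0 ν l x * Real.exp (wdot γ ν x)) :
    (𝒴.map fun y => kExp Yf p0 ν l y (fun x => wdot γ ν x)
      - Real.log (pExp p0 ν l (fun x => Real.exp (wdot γ ν x)))).sum ≤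
    LL Yf p0 ν 𝒴 (γ + l) - LL Yf p0 ν 𝒴 l := by
  rw [LL, LL, ← Multiset.sum_map_sub]
  exact Multiset.sum_map_le_sum_map _ _ fun y hy =>
    kExp_sub_log_pExp_le_log_pLLY_sub hp0 hZl hZgl (hpos y hy) (hksum y hy) hpsum

/-- Jensen lower bound on the log-likelihood difference:
`L(γ+λ) − L(λ) ≥ ∑_{y∈𝒴} (k_λ[γ·ν] − ln p_λ[e^{γ·ν}])`. -/
theorem loglikelihood_difference_jensen_bound
    {X Y : Type*} [Countable X] (Yf : X → Y)
    (p0 : X → ℝ) (hp0 : ∀ x, 0 < p0 x) (hp0sum : ∑' x : X, p0 x = 1)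
    {n : ℕ} (ν : Fin n → X → ℕ)
    (𝒴 : Multiset Y) (l γ : Fin n → ℝ)
    (hZl : Summable fun x : X => Real.exp (wdot l ν x) * p0 x)
    (hZgl : Summable fun x : X => Real.exp (wdot (γ + l) ν x) * p0 x)
    (hpos : ∀ y ∈ 𝒴, 0 < pLLY Yf p0 ν l y)
    (hksum : ∀ y ∈ 𝒴, Summable fun x : {x : X // Yf x = y} =>
      (pLL p0 ν l x.1 / pLLY Yf p0 ν l y) * wdot γ ν x.1)
    (hpsum : Summable fun x : X => pLL p0 ν l x * Real.exp (wdot γ ν x)) :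
    (𝒴.map fun y => kExp Yf p0 ν l y (fun x => wdot γ ν x)
      - Real.log (pExp p0 ν l (fun x => Real.exp (wdot γ ν x)))).sum ≤
    LL Yf p0 ν 𝒴 (γ + l) - LL Yf p0 ν 𝒴 l :=
  loglikelihood_difference_jensen_bound_general Yf p0 hp0 ν 𝒴 l γ hZl hZgl hpos hksum hpsum
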